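/- arXiv:1309.3099 — 2 statements merged into one kernel-verified Lean document; each statement's English description precedes it below -/
import Mathlib

section
/- Suppose g is analytic on an open set containing a closed square B ⊂ ℂ of side length s > 0, g'(z) ≠ 0 for z ∈ B, and s · sup_{z∈B} |g''(z)/g'(z)| ≤ 1/(√2·s + 1). Then g is injective on B. -/
open Complex Set MeasureTheory intervalIntegral
open scoped Interval

/-!
If `g a = g b` for `a, b` in the square, put `c = b - a` and `f t = g' (a + t c)`. Since
`f' / f = c · (g'' / g') (a + t c)` has norm at most `x = ‖c‖ M ≤ √2 s M ≤ √2`, integrating the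
logarithmic derivative from the midpoint gives `f t = f (1/2) · exp (H t)` with
`‖H t‖ ≤ x |t - 1/2|`. Hence `|f t / f (1/2) - 1| ≤ 2 x |t - 1/2|`, whose integral over `[0, 1]`
is `x / 2 < 1`, so `∫₀¹ f ≠ 0`; but `0 = g b - g a = c ∫₀¹ f`, forcing `c = 0`.
-/

theorem eq_mul_exp_integral_div_of_hasDerivWithinAt {f f' : ℝ → ℂ} {a b t₀ : ℝ}
    (hf : ∀ t ∈ Icc a b, HasDerivWithinAt f (f' t) (Icc a b) t)
    (hf₀ : ∀ t ∈ Icc a b, f t ≠ 0) (hφ : ContinuousOn (fun t => f' t / f t) (Icc a b))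
    (ht₀ : t₀ ∈ Icc a b) :
    ∀ t ∈ Icc a b, f t = f t₀ * exp (∫ τ in t₀..t, f' τ / f τ) := by
  set H : ℝ → ℂ := fun t => ∫ τ in t₀..t, f' τ / f τ
  have hH : ∀ t ∈ Icc a b, HasDerivWithinAt H (f' t / f t) (Icc a b) t := fun t ht =>
    have : Fact (t ∈ Icc a b) := ⟨ht⟩
    intervalIntegral.integral_hasDerivWithinAt_right
      ((hφ.mono (uIcc_subset_Icc ht₀ ht)).intervalIntegrable)
      (hφ.stronglyMeasurableAtFilter_nhdsWithin measurableSet_Icc t) (hφ t ht)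
  have hderiv : ∀ t ∈ Icc a b, HasDerivWithinAt (fun t => f t * exp (-H t)) 0 (Icc a b) t := by
    intro t ht
    have h : HasDerivWithinAt (fun t => f t * exp (-H t))
        (f' t * exp (-H t) + f t * (exp (-H t) * -(f' t / f t))) (Icc a b) t :=
      (hf t ht).mul (hH t ht).neg.cexp
    refine h.congr_deriv ?_
    field_simp [hf₀ t ht]
    ring
  have hconst := constant_of_has_deriv_right_zero
    (fun t ht => (hderiv t ht).continuousWithinAt)
    (fun t ht => (hderiv t (Ico_subset_Icc_self ht)).mono_of_mem_nhdsWithin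
      (Icc_mem_nhdsGE_of_mem ht))
  intro t ht
  have h := (hconst t ht).trans (hconst t₀ ht₀).symm
  simp only [H, intervalIntegral.integral_same, neg_zero, exp_zero, mul_one] at h
  rw [← h, mul_assoc, ← exp_add, neg_add_cancel, exp_zero, mul_one]

theorem integral_abs_sub_half : ∫ t in (0:ℝ)..1, |t - 1/2| = 1/4 := by
  have hc : Continuous fun t : ℝ => |t - 1/2| := by fun_prop
  have half (b : ℝ) : ∫ t in Ι (1/2) b, |t - 1/2| = (b - 1/2) ^ 2 / 2 := by
    simpa [one_add_one_eq_two] using integral_pow_abs_sub_uIoc (a := 1/2) (b := b) (n := 1)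
  rw [← integral_add_adjacent_intervals (hc.intervalIntegrable 0 (1/2))
      (hc.intervalIntegrable _ 1), integral_of_le (by norm_num), integral_of_le (by norm_num),
    ← uIoc_of_ge (by norm_num : (0:ℝ) ≤ 1/2), ← uIoc_of_le (by norm_num : (1/2:ℝ) ≤ 1), half, half]
  norm_num

theorem integral_ne_zero_of_norm_sub_one_le {u : ℝ → ℂ} {x : ℝ}
    (hu : IntervalIntegrable u volume 0 1)
    (h : ∀ t ∈ Icc (0:ℝ) 1, ‖u t - 1‖ ≤ x * |t - 1/2|) (hx : x < 4) :
    ∫ t in (0:ℝ)..1, u t ≠ 0 := by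
  intro h0
  have hle : ‖∫ t in (0:ℝ)..1, (u t - 1)‖ ≤ ∫ t in (0:ℝ)..1, x * |t - 1/2| :=
    norm_integral_le_of_norm_le zero_le_one
      (ae_of_all _ fun t ht => h t (Ioc_subset_Icc_self ht))
      (Continuous.intervalIntegrable (by fun_prop) _ _)
  rw [integral_sub hu intervalIntegrable_const, h0, intervalIntegral.integral_const_mul,
    integral_abs_sub_half] at hle
  norm_num at hle
  linarith

theorem integral_ne_zero_of_norm_div_le {f f' : ℝ → ℂ} {x : ℝ}
    (hf : ∀ t ∈ Icc (0:ℝ) 1, HasDerivWithinAt f (f' t) (Icc 0 1) t)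
    (hf₀ : ∀ t ∈ Icc (0:ℝ) 1, f t ≠ 0) (hφ : ContinuousOn (fun t => f' t / f t) (Icc 0 1))
    (hle : ∀ t ∈ Icc (0:ℝ) 1, ‖f' t / f t‖ ≤ x) (hx : x < 2) :
    ∫ t in (0:ℝ)..1, f t ≠ 0 := by
  have hmid : (1/2 : ℝ) ∈ Icc (0:ℝ) 1 := by norm_num
  have hx₀ : 0 ≤ x := (norm_nonneg _).trans (hle 0 (left_mem_Icc.2 zero_le_one))
  have hH : ∀ t ∈ Icc (0:ℝ) 1, ‖∫ τ in (1/2)..t, f' τ / f τ‖ ≤ x * |t - 1/2| := fun t ht =>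
    norm_integral_le_of_norm_le_const fun τ hτ =>
      hle τ (uIcc_subset_Icc hmid ht (uIoc_subset_uIcc hτ))
  have hu : ∀ t ∈ Icc (0:ℝ) 1, ‖f t / f (1/2) - 1‖ ≤ 2 * x * |t - 1/2| := by
    intro t ht
    have habs : |t - 1/2| ≤ 1/2 := abs_le.2 ⟨by linarith [ht.1], by linarith [ht.2]⟩
    rw [eq_mul_exp_integral_div_of_hasDerivWithinAt hf hf₀ hφ hmid t ht,
      mul_div_cancel_left₀ _ (hf₀ _ hmid), mul_assoc]
    exact (norm_exp_sub_one_le ((hH t ht).trans (by nlinarith))).trans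
      (mul_le_mul_of_nonneg_left (hH t ht) zero_le_two)
  have hcont : ContinuousOn f (Icc 0 1) := fun t ht => (hf t ht).continuousWithinAt
  have := integral_ne_zero_of_norm_sub_one_le
    ((hcont.div_const _).intervalIntegrable_of_Icc zero_le_one) hu (by linarith)
  rw [intervalIntegral.integral_div] at this
  exact fun h => this (by rw [h, zero_div])

theorem hasDerivAt_comp_add_ofReal_mul {g : ℂ → ℂ} {g' a c : ℂ} {t : ℝ}
    (h : HasDerivAt g g' (a + t * c)) : HasDerivAt (fun t : ℝ => g (a + t * c)) (c * g') t := by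
  have hline : HasDerivAt (fun t : ℝ => a + t * c) c t := by
    simpa using ((hasDerivAt_id t).ofReal_comp.mul_const c).const_add a
  exact h.scomp t hline

theorem injOn_of_norm_logDeriv_deriv_le {g : ℂ → ℂ} {K : Set ℂ} {M : ℝ} (hK : Convex ℝ K)
    (hg : AnalyticOnNhd ℂ g K) (hg' : ∀ z ∈ K, deriv g z ≠ 0)
    (hM : ∀ z ∈ K, ‖logDeriv (deriv g) z‖ ≤ M) (hKM : ∀ a ∈ K, ∀ b ∈ K, ‖b - a‖ * M < 2) :
    InjOn g K := by
  intro a ha b hb hab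
  set c := b - a
  have hγ : ∀ t ∈ Icc (0:ℝ) 1, a + t * c ∈ K := fun t ht => by
    simpa [Complex.real_smul] using hK.add_smul_sub_mem ha hb ht
  have hγc : Continuous fun t : ℝ => a + t * c := by fun_prop
  have hg₁ (t) (ht : t ∈ Icc (0:ℝ) 1) :=
    hasDerivAt_comp_add_ofReal_mul (hg _ (hγ t ht)).differentiableAt.hasDerivAt
  have hg₂ (t) (ht : t ∈ Icc (0:ℝ) 1) :=
    hasDerivAt_comp_add_ofReal_mul (hg _ (hγ t ht)).deriv.differentiableAt.hasDerivAt
  have hφ : ContinuousOn (fun t : ℝ => c * deriv (deriv g) (a + t * c) / deriv g (a + t * c))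
      (Icc 0 1) := fun t ht =>
    ((continuousAt_const.mul ((hg _ (hγ t ht)).deriv.deriv.continuousAt.comp
      (f := fun t : ℝ => a + t * c) hγc.continuousAt)).div
      (hg₂ t ht).continuousAt (hg' _ (hγ t ht))).continuousWithinAt
  have hle (t) (ht : t ∈ Icc (0:ℝ) 1) :
      ‖c * deriv (deriv g) (a + t * c) / deriv g (a + t * c)‖ ≤ ‖c‖ * M := by
    rw [mul_div_assoc, norm_mul, ← logDeriv_apply]
    exact mul_le_mul_of_nonneg_left (hM _ (hγ t ht)) (norm_nonneg c)
  have hne : ∫ t in (0:ℝ)..1, deriv g (a + t * c) ≠ 0 :=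
    integral_ne_zero_of_norm_div_le (fun t ht => (hg₂ t ht).hasDerivWithinAt)
      (fun t ht => hg' _ (hγ t ht)) hφ hle (by simpa [mul_comm] using hKM a ha b hb)
  have hFTC : g b - g a = c * ∫ t in (0:ℝ)..1, deriv g (a + t * c) := by
    rw [← intervalIntegral.integral_const_mul, integral_eq_sub_of_hasDerivAt
      (fun t ht => hg₁ t (uIcc_of_le (zero_le_one' ℝ) ▸ ht))
      (ContinuousOn.intervalIntegrable_of_Icc zero_le_one fun t ht =>
        (continuousAt_const.mul (hg₂ t ht).continuousAt).continuousWithinAt)]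
    simp [c]
  rw [hab, sub_self, zero_eq_mul] at hFTC
  exact (sub_eq_zero.1 (hFTC.resolve_right hne)).symm

theorem setOf_square_eq_reProdIm (w : ℂ) (s : ℝ) :
    {z : ℂ | w.re ≤ z.re ∧ z.re ≤ w.re + s ∧ w.im ≤ z.im ∧ z.im ≤ w.im + s} =
      Icc w.re (w.re + s) ×ℂ Icc w.im (w.im + s) := by
  ext z
  simp [mem_reProdIm, and_assoc]

theorem convex_reProdIm {s t : Set ℝ} (hs : Convex ℝ s) (ht : Convex ℝ t) : Convex ℝ (s ×ℂ t) := by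
  simpa only [convexHull_reProdIm, hs.convexHull_eq, ht.convexHull_eq] using
    convex_convexHull ℝ (s ×ℂ t)

theorem norm_sub_le_of_mem_square {w p q : ℂ} {s : ℝ}
    (hp : p ∈ Icc w.re (w.re + s) ×ℂ Icc w.im (w.im + s))
    (hq : q ∈ Icc w.re (w.re + s) ×ℂ Icc w.im (w.im + s)) : ‖p - q‖ ≤ √2 * s := by
  obtain ⟨⟨hp₁, hp₂⟩, hp₃, hp₄⟩ := hp
  obtain ⟨⟨hq₁, hq₂⟩, hq₃, hq₄⟩ := hq
  refine (norm_le_sqrt_two_mul_max _).trans (mul_le_mul_of_nonneg_left ?_ (Real.sqrt_nonneg 2))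
  simp only [sub_re, sub_im, max_le_iff, abs_sub_le_iff]
  refine ⟨⟨?_, ?_⟩, ?_, ?_⟩ <;> linarith

theorem stmt4 (g : ℂ → ℂ) (w : ℂ) (s : ℝ) (hs : 0 < s)
    (B : Set ℂ)
    (hB : B = {z : ℂ | w.re ≤ z.re ∧ z.re ≤ w.re + s ∧ w.im ≤ z.im ∧ z.im ≤ w.im + s})
    (V : Set ℂ) (hV : IsOpen V) (hBV : B ⊆ V) (hg : DifferentiableOn ℂ g V)
    (hg' : ∀ z ∈ B, deriv g z ≠ 0)
    (hnl : s * sSup ((fun z => ‖deriv (deriv g) z / deriv g z‖) '' B)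
        ≤ 1 / (Real.sqrt 2 * s + 1)) :
    Set.InjOn g B := by
  rw [setOf_square_eq_reProdIm] at hB
  subst hB
  have hga : AnalyticOnNhd ℂ g _ := (hg.analyticOnNhd hV).mono hBV
  set M := sSup ((fun z => ‖deriv (deriv g) z / deriv g z‖) '' _)
  have hM : ∀ z ∈ Icc w.re (w.re + s) ×ℂ Icc w.im (w.im + s), ‖logDeriv (deriv g) z‖ ≤ M :=
    fun z hz => le_csSup ((isCompact_Icc.reProdIm isCompact_Icc).bddAbove_image fun z hz =>
      ((hga z hz).deriv.deriv.continuousAt.div (hga z hz).deriv.continuousAt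
        (hg' z hz)).norm.continuousWithinAt) (mem_image_of_mem _ hz)
  have hM₀ : 0 ≤ M := (norm_nonneg _).trans (hM w (by simp [mem_reProdIm, hs.le]))
  have hsM : s * M ≤ 1 :=
    hnl.trans (div_le_one_of_le₀ (by nlinarith [Real.sqrt_nonneg 2]) (by positivity))
  refine injOn_of_norm_logDeriv_deriv_le (convex_reProdIm (convex_Icc _ _) (convex_Icc _ _))
    hga hg' hM fun a ha b hb => ?_
  calc ‖b - a‖ * M ≤ √2 * s * M :=
        mul_le_mul_of_nonneg_right (norm_sub_le_of_mem_square hb ha) hM₀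
    _ = √2 * (s * M) := mul_assoc _ _ _
    _ ≤ √2 * 1 := mul_le_mul_of_nonneg_left hsM (Real.sqrt_nonneg 2)
    _ < 2 := by nlinarith [Real.sq_sqrt (zero_le_two (α := ℝ)), Real.one_lt_sqrt_two]
end

section
/- Suppose f is entire and there exist A, B, C, r_0 > 1 with A·log M(r,f) ≤ log M(Cr, f) ≤ B·log M(r,f) for r ≥ r_0, where M is the maximum modulus function. Then for every k > 1 there exists a constant d > 1 and r_1 > 0 such that log M(kr, f) ≥ d·log M(r,f) for all r ≥ r_1. -/
/-!
By Hadamard's three circles theorem on the radii `r / C < r < k r`, `log M` is convex in `log r`: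
`(log k + log C) log M(r) ≤ log k · log M(r / C) + log C · log M(k r)`.
The growth hypothesis `A log M(r / C) ≤ log M(r)` eliminates the innermost circle, leaving
`d log M(r) ≤ log M(k r)` with `d = 1 + (A - 1) log k / (A log C)`.
-/

open Complex

noncomputable def maxMod (f : ℂ → ℂ) (r : ℝ) : ℝ :=
  sSup ((fun z => ‖f z‖) '' {z : ℂ | ‖z‖ = r})

theorem one_add_mul_le_of_interp {A a b x m y : ℝ} (hA : 0 < A) (ha : 0 ≤ a) (hb : 0 < b)
    (hconv : (a + b) * x ≤ a * m + b * y) (hgrowth : A * m ≤ x) :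
    (1 + (A - 1) * a / (A * b)) * x ≤ y := by
  have hAb : 0 < A * b := mul_pos hA hb
  rw [← mul_le_mul_iff_of_pos_left hAb]
  field_simp
  nlinarith

namespace maxMod

open Complex.HadamardThreeLines

variable {f : ℂ → ℂ} {z : ℂ} {r s t u a : ℝ}

theorem zero (r : ℝ) : maxMod 0 r = 0 := by
  refine le_antisymm (Real.sSup_nonpos ?_) (Real.sSup_nonneg ?_) <;>
    rintro _ ⟨w, -, rfl⟩ <;> simp

theorem bddAbove_image (hf : Continuous f) (r : ℝ) :
    BddAbove ((fun z => ‖f z‖) '' {z : ℂ | ‖z‖ = r}) := by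
  have hsphere : {z : ℂ | ‖z‖ = r} = Metric.sphere 0 r := by ext; simp
  rw [hsphere]
  exact ((isCompact_sphere 0 r).image (continuous_norm.comp hf)).bddAbove

theorem norm_le_of_norm_eq (hf : Continuous f) (hz : ‖z‖ = r) : ‖f z‖ ≤ maxMod f r :=
  le_csSup (bddAbove_image hf r) ⟨z, hz, rfl⟩

theorem norm_le (hf : Differentiable ℂ f) (hr : 0 < r) (hz : ‖z‖ ≤ r) : ‖f z‖ ≤ maxMod f r := by
  refine norm_le_of_forall_mem_frontier_norm_le (U := Metric.ball (0 : ℂ) r) Metric.isBounded_ball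
    hf.diffContOnCl (fun w hw => norm_le_of_norm_eq hf.continuous ?_) ?_
  · simpa [frontier_ball (0 : ℂ) hr.ne'] using hw
  · simpa [closure_ball (0 : ℂ) hr.ne'] using hz

theorem pos (hf : Differentiable ℂ f) (hz : f z ≠ 0) (hr : 0 < r) (hzr : ‖z‖ ≤ r) :
    0 < maxMod f r :=
  (norm_pos_iff.2 hz).trans_le (norm_le hf hr hzr)

theorem le_of_forall (hr : 0 ≤ r) (h : ∀ z : ℂ, ‖z‖ = r → ‖f z‖ ≤ a) : maxMod f r ≤ a :=
  csSup_le ⟨_, r, by simp [abs_of_nonneg hr], rfl⟩ (by rintro _ ⟨z, hz, rfl⟩; exact h z hz)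

/-- **Hadamard's three circles theorem**, from the three lines theorem for `w ↦ f (c * exp w)`
on the strip `log s ≤ re w ≤ log u`, where `c = z / t` for a point `z` of the middle circle. -/
theorem le_rpow_mul_rpow (hf : Differentiable ℂ f) (hs : 0 < s) (hst : s ≤ t) (htu : t ≤ u)
    (hsu : s < u) :
    maxMod f t ≤ maxMod f s ^ (1 - (Real.log t - Real.log s) / (Real.log u - Real.log s)) *
      maxMod f u ^ ((Real.log t - Real.log s) / (Real.log u - Real.log s)) := by
  have ht : 0 < t := hs.trans_le hst
  have hu : 0 < u := ht.trans_le htu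
  refine le_of_forall ht.le fun z hz => ?_
  set c : ℂ := z / t
  have hc : ‖c‖ = 1 := by simp [c, hz, abs_of_pos ht, ht.ne']
  have norm_c_mul_exp (w : ℂ) : ‖c * exp w‖ = Real.exp w.re := by
    rw [norm_mul, hc, one_mul, norm_exp]
  have hcz : c * exp (Real.log t : ℂ) = z := by
    rw [← ofReal_exp, Real.exp_log ht, div_mul_cancel₀ _ (ofReal_ne_zero.2 ht.ne')]
  have hg : Differentiable ℂ fun w => f (c * exp w) :=
    hf.comp (differentiable_exp.const_mul c)
  have key := norm_le_interp_of_mem_verticalClosedStrip' (f := fun w => f (c * exp w))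
    (z := (Real.log t : ℂ)) (a := maxMod f s) (b := maxMod f u) (Real.log_lt_log hs hsu)
    (by simpa [verticalClosedStrip] using ⟨Real.log_le_log hs hst, Real.log_le_log ht htu⟩)
    hg.diffContOnCl ?bdd ?left ?right
  · simpa [hcz] using key
  case bdd =>
    refine ⟨maxMod f u, ?_⟩
    rintro _ ⟨w, hw, rfl⟩
    refine norm_le hf hu ?_
    rw [norm_c_mul_exp, ← Real.exp_log hu]
    exact Real.exp_le_exp.2 hw.2
  case left =>
    intro w hw
    refine norm_le_of_norm_eq hf.continuous ?_
    rw [norm_c_mul_exp, show w.re = Real.log s from hw, Real.exp_log hs]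
  case right =>
    intro w hw
    refine norm_le_of_norm_eq hf.continuous ?_
    rw [norm_c_mul_exp, show w.re = Real.log u from hw, Real.exp_log hu]

theorem log_le_interp (hf : Differentiable ℂ f) (hz : f z ≠ 0) (hzs : ‖z‖ ≤ s) (hs : 0 < s)
    (hst : s ≤ t) (htu : t ≤ u) (hsu : s < u) :
    (Real.log u - Real.log s) * Real.log (maxMod f t) ≤
      (Real.log u - Real.log t) * Real.log (maxMod f s) +
        (Real.log t - Real.log s) * Real.log (maxMod f u) := by
  have hMs := pos hf hz hs hzs
  have hMt := pos hf hz (hs.trans_le hst) (hzs.trans hst)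
  have hMu := pos hf hz (hs.trans_le (hst.trans htu)) (hzs.trans (hst.trans htu))
  have hL : 0 < Real.log u - Real.log s := sub_pos.2 (Real.log_lt_log hs hsu)
  have h := Real.log_le_log hMt (le_rpow_mul_rpow hf hs hst htu hsu)
  rw [Real.log_mul (Real.rpow_pos_of_pos hMs _).ne' (Real.rpow_pos_of_pos hMu _).ne',
    Real.log_rpow hMs, Real.log_rpow hMu] at h
  field_simp at h
  linarith

end maxMod

theorem stmt18_general (f : ℂ → ℂ) (hf : Differentiable ℂ f)
    (A B C r₀ : ℝ) (hA : 1 < A) (hC : 1 < C)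
    (hM : ∀ r ≥ r₀, A * Real.log (maxMod f r) ≤ Real.log (maxMod f (C * r)) ∧
      Real.log (maxMod f (C * r)) ≤ B * Real.log (maxMod f r)) :
    ∀ k : ℝ, 1 < k → ∃ d : ℝ, 1 < d ∧ ∃ r₁ : ℝ, 0 < r₁ ∧
      ∀ r ≥ r₁, d * Real.log (maxMod f r) ≤ Real.log (maxMod f (k * r)) := by
  intro k hk
  rcases eq_or_ne f 0 with rfl | hf0
  · exact ⟨2, one_lt_two, 1, one_pos, fun r _ => by simp [maxMod.zero]⟩
  obtain ⟨z, hz⟩ := Function.ne_iff.1 hf0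
  have hlogk := Real.log_pos hk
  have hlogC := Real.log_pos hC
  have hC0 : 0 < C := by linarith
  refine ⟨1 + (A - 1) * Real.log k / (A * Real.log C), ?_, C * max r₀ (‖z‖ + 1), by positivity,
    fun r hr => ?_⟩
  · have : 0 < (A - 1) * Real.log k / (A * Real.log C) := by
      have := sub_pos.2 hA
      positivity
    linarith
  have hrC : max r₀ (‖z‖ + 1) ≤ r / C := (le_div_iff₀' hC0).2 hr
  have hr0 : 0 < r / C := by linarith [le_max_right r₀ (‖z‖ + 1), norm_nonneg z]
  have hr : 0 < r := by simpa [hC0] using hr0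
  have hconv := maxMod.log_le_interp (t := r) (u := k * r) hf hz
    (by linarith [le_max_right r₀ (‖z‖ + 1)]) hr0 (div_le_self hr.le hC.le)
    (le_mul_of_one_le_left hr.le hk.le) ((div_lt_self hr hC).trans (lt_mul_of_one_lt_left hr hk))
  rw [Real.log_div hr.ne' hC0.ne', Real.log_mul (by linarith) hr.ne'] at hconv
  have hgrowth := (hM (r / C) (le_of_max_le_left hrC)).1
  rw [mul_div_cancel₀ _ hC0.ne'] at hgrowth
  exact one_add_mul_le_of_interp (by linarith) hlogk.le hlogC (by linear_combination hconv) hgrowth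

theorem stmt18 (f : ℂ → ℂ) (hf : Differentiable ℂ f)
    (A B C r₀ : ℝ) (hA : 1 < A) (hB : 1 < B) (hC : 1 < C) (hr₀ : 1 < r₀)
    (hM : ∀ r ≥ r₀, A * Real.log (maxMod f r) ≤ Real.log (maxMod f (C * r)) ∧
      Real.log (maxMod f (C * r)) ≤ B * Real.log (maxMod f r)) :
    ∀ k : ℝ, 1 < k → ∃ d : ℝ, 1 < d ∧ ∃ r₁ : ℝ, 0 < r₁ ∧
      ∀ r ≥ r₁, d * Real.log (maxMod f r) ≤ Real.log (maxMod f (k * r)) :=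
  stmt18_general f hf A B C r₀ hA hC hM
end
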